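/- arXiv:1312.1239 — 2 statements merged into one kernel-verified Lean document; each statement's English description precedes it below -/
import Mathlib

section
/- Let A, B, C, D be complex matrices of compatible sizes with A, D square. Set S = A − C D^d B, Z = D − B A^d C, and k = ind(A). If A^π C D^d B = 0 and D^π = Z^π, then S^d = A^d + A^d C Z^d B A^d − ∑_{i=0}^{k-1} (A^d + A^d C Z^d B A^d)^{i+1} A^d C Z^d B A^i A^π. -/
open Matrix Finset

attribute [local instance] Classical.propDecidable

noncomputable def drazin {n : Type*} [Fintype n] [DecidableEq n]
    (A : Matrix n n ℂ) : Matrix n n ℂ :=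
  if h : ∃ X : Matrix n n ℂ,
      A * X = X * A ∧ X * A * X = X ∧ ∃ k : ℕ, A ^ (k + 1) * X = A ^ k
  then h.choose else 0

noncomputable def ind {n : Type*} [Fintype n] [DecidableEq n]
    (A : Matrix n n ℂ) : ℕ :=
  sInf {k : ℕ | (A ^ k).rank = (A ^ (k + 1)).rank}

noncomputable def spi {n : Type*} [Fintype n] [DecidableEq n]
    (A : Matrix n n ℂ) : Matrix n n ℂ :=
  1 - A * drazin A

section Infra

variable {n : Type*} [Fintype n] [DecidableEq n]

def IsDrazin (A X : Matrix n n ℂ) : Prop :=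
  A * X = X * A ∧ X * A * X = X ∧ ∃ k : ℕ, A ^ (k + 1) * X = A ^ k

lemma isDrazin_unique {A X Y : Matrix n n ℂ} (hX : IsDrazin A X) (hY : IsDrazin A Y) :
    X = Y := by
  obtain ⟨cX, mX, k, pX⟩ := hX
  obtain ⟨cY, mY, l, pY⟩ := hY
  have hAX : A * X * X = X := by rw [cX]; exact mX
  have hYA : Y * Y * A = Y := by
    calc Y * Y * A = Y * (Y * A) := by rw [mul_assoc]
    _ = Y * (A * Y) := by rw [cY]
    _ = Y * A * Y := by rw [mul_assoc]
    _ = Y := mY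
  have st1 : ∀ j : ℕ, A ^ j * X ^ (j + 1) = X := by
    intro j
    induction j with
    | zero => simp
    | succ j ih =>
      have h2 : X ^ (j + 2) = X * X * X ^ j := by
        rw [show j + 2 = 2 + j by omega, pow_add, pow_two]
      calc A ^ (j + 1) * X ^ (j + 2) = (A ^ j * A) * (X * X * X ^ j) := by
            rw [pow_succ, h2]
      _ = A ^ j * ((A * X * X) * X ^ j) := by simp only [mul_assoc]
      _ = A ^ j * (X * X ^ j) := by rw [hAX]
      _ = A ^ j * X ^ (j + 1) := by rw [pow_succ']
      _ = X := ih
  have st1Y : ∀ j : ℕ, Y ^ (j + 1) * A ^ j = Y := by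
    intro j
    induction j with
    | zero => simp
    | succ j ih =>
      calc Y ^ (j + 2) * A ^ (j + 1) = (Y * Y ^ (j + 1)) * (A ^ j * A) := by
            rw [show Y ^ (j+2) = Y * Y ^ (j+1) from pow_succ' Y (j+1), show A ^ (j+1) = A ^ j * A from pow_succ A j]
      _ = Y * ((Y ^ (j + 1) * A ^ j) * A) := by simp only [mul_assoc]
      _ = Y * (Y * A) := by rw [ih]
      _ = Y * Y * A := by rw [mul_assoc]
      _ = Y := hYA
  have cY' : Commute A Y := cY
  have hXY : X = Y * (A * X) := by
    calc X = A ^ l * X ^ (l + 1) := (st1 l).symm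
    _ = (A ^ (l + 1) * Y) * X ^ (l + 1) := by rw [pY]
    _ = (Y * A ^ (l + 1)) * X ^ (l + 1) := by rw [(cY'.pow_left (l + 1)).eq]
    _ = Y * (A * (A ^ l * X ^ (l + 1))) := by
          rw [show A ^ (l+1) = A * A ^ l from pow_succ' A l]
          simp only [mul_assoc]
    _ = Y * (A * X) := by rw [st1 l]
  have hYX : Y = Y * (A * X) := by
    calc Y = Y ^ (k + 1) * A ^ k := (st1Y k).symm
    _ = Y ^ (k + 1) * (A ^ (k + 1) * X) := by rw [pX]
    _ = (Y ^ (k + 1) * A ^ k) * (A * X) := by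
          rw [show A ^ (k+1) = A ^ k * A from pow_succ A k]
          simp only [mul_assoc]
    _ = Y * (A * X) := by rw [st1Y k]
  rw [hXY, ← hYX]

open Polynomial in
lemma exists_isDrazin (A : Matrix n n ℂ) : ∃ X, IsDrazin A X := by
  classical
  set p : ℂ[X] := X * (Matrix.charpoly A) with hp
  have hp0 : p ≠ 0 := mul_ne_zero X_ne_zero (Matrix.charpoly_monic A).ne_zero
  have hroot : 0 < p.rootMultiplicity 0 := (rootMultiplicity_pos hp0).mpr (by simp [hp, IsRoot])
  obtain ⟨q, hfac, hq⟩ := p.exists_eq_pow_rootMultiplicity_mul_and_not_dvd hp0 0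
  obtain ⟨k', hk'⟩ : ∃ k', p.rootMultiplicity 0 = k' + 1 :=
    ⟨p.rootMultiplicity 0 - 1, (Nat.succ_pred_eq_of_pos hroot).symm⟩
  rw [hk'] at hfac
  simp only [map_zero, sub_zero] at hfac hq
  have hcop : IsCoprime ((X : ℂ[X]) ^ (k' + 1)) q :=
    (Polynomial.irreducible_X.coprime_iff_not_dvd.mpr hq).pow_left
  obtain ⟨u, v, huv⟩ := hcop
  have hm : Polynomial.aeval A ((X : ℂ[X]) ^ (k' + 1) * q) = 0 := by
    rw [← hfac, hp]
    simp [Matrix.aeval_self_charpoly]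
  have hA : Polynomial.aeval A (X : ℂ[X]) = A := Polynomial.aeval_X A
  set w : Polynomial ℂ := (X : ℂ[X]) ^ (2 * k' + 1) * u ^ 2 with hw
  refine ⟨Polynomial.aeval A w, ?_, ?_, k' + 1, ?_⟩
  · calc A * Polynomial.aeval A w = Polynomial.aeval A (X * w) := by
          simp only [hw, _root_.map_mul, map_pow, hA, mul_assoc]
    _ = Polynomial.aeval A (w * X) := by rw [mul_comm]
    _ = Polynomial.aeval A w * A := by
          simp only [hw, _root_.map_mul, map_pow, hA, mul_assoc]
  · have key : w * X * w
        = w + (-((X : ℂ[X]) ^ (2 * k' + 1) * u ^ 3 * v + (X : ℂ[X]) ^ k' * u ^ 2 * v))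
            * ((X : ℂ[X]) ^ (k' + 1) * q) := by
      rw [hw]
      linear_combination (((X : ℂ[X]) ^ (2 * k' + 1) * u ^ 3 + (X : ℂ[X]) ^ k' * u ^ 2)
        * (X : ℂ[X]) ^ (k' + 1)) * huv
    have h2 : Polynomial.aeval A (w * X * w) = Polynomial.aeval A w := by
      rw [key, map_add,
        _root_.map_mul (Polynomial.aeval A)
          (-((X : ℂ[X]) ^ (2 * k' + 1) * u ^ 3 * v + (X : ℂ[X]) ^ k' * u ^ 2 * v))
          ((X : ℂ[X]) ^ (k' + 1) * q),
        hm, mul_zero, add_zero]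
    calc Polynomial.aeval A w * A * Polynomial.aeval A w
        = Polynomial.aeval A (w * X * w) := by
          simp only [hw, _root_.map_mul, map_pow, hA, mul_assoc]
    _ = Polynomial.aeval A w := h2
  · have key : (X : ℂ[X]) ^ (k' + 1 + 1) * w
        = (X : ℂ[X]) ^ (k' + 1)
          + (-((X : ℂ[X]) ^ (k' + 1) * u * v + v)) * ((X : ℂ[X]) ^ (k' + 1) * q) := by
      rw [hw]
      linear_combination (((X : ℂ[X]) ^ (k' + 1) * u + 1) * (X : ℂ[X]) ^ (k' + 1)) * huv
    have h3 : Polynomial.aeval A ((X : ℂ[X]) ^ (k' + 1 + 1) * w) = A ^ (k' + 1) := by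
      rw [key, map_add,
        _root_.map_mul (Polynomial.aeval A)
          (-((X : ℂ[X]) ^ (k' + 1) * u * v + v)) ((X : ℂ[X]) ^ (k' + 1) * q),
        hm, mul_zero, add_zero, map_pow, hA]
    calc A ^ (k' + 1 + 1) * Polynomial.aeval A w
        = Polynomial.aeval A ((X : ℂ[X]) ^ (k' + 1 + 1) * w) := by
          simp only [hw, _root_.map_mul, map_pow, hA, mul_assoc]
    _ = A ^ (k' + 1) := h3

lemma isDrazin_drazin (A : Matrix n n ℂ) : IsDrazin A (drazin A) := by
  have h : ∃ X : Matrix n n ℂ,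
      A * X = X * A ∧ X * A * X = X ∧ ∃ k : ℕ, A ^ (k + 1) * X = A ^ k :=
    exists_isDrazin A
  rw [drazin, dif_pos h]
  exact h.choose_spec

lemma drazin_eq {A X : Matrix n n ℂ} (h : IsDrazin A X) : drazin A = X :=
  isDrazin_unique (isDrazin_drazin A) h

end Infra

section Ind

variable {n : Type*} [Fintype n] [DecidableEq n]

lemma pow_ind_mul_spi (A : Matrix n n ℂ) : A ^ ind A * spi A = 0 := by
  -- nonemptiness of the rank-stabilization set
  have hmono : ∀ k : ℕ, (A ^ (k + 1)).rank ≤ (A ^ k).rank := by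
    intro k
    rw [pow_succ]
    exact Matrix.rank_mul_le_left _ _
  have hne : {k : ℕ | (A ^ k).rank = (A ^ (k + 1)).rank}.Nonempty := by
    by_contra h
    rw [Set.not_nonempty_iff_eq_empty] at h
    have hstrict : ∀ k : ℕ, (A ^ (k + 1)).rank < (A ^ k).rank := by
      intro k
      refine lt_of_le_of_ne (hmono k) fun e => ?_
      have : k ∈ {k : ℕ | (A ^ k).rank = (A ^ (k + 1)).rank} := e.symm
      simp [h] at this
    have hb : ∀ k : ℕ, (A ^ k).rank + k ≤ (A ^ 0).rank := by
      intro k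
      induction k with
      | zero => simp
      | succ k ih =>
        have := hstrict k
        omega
    have := hb ((A ^ 0).rank + 1)
    omega
  have hj : (A ^ ind A).rank = (A ^ (ind A + 1)).rank := Nat.sInf_mem hne
  set j := ind A with hjdef
  -- range stabilization
  have hle : LinearMap.range (A ^ (j + 1)).mulVecLin ≤ LinearMap.range (A ^ j).mulVecLin := by
    rw [pow_succ, Matrix.mulVecLin_mul]
    exact LinearMap.range_comp_le_range _ _
  have heq : LinearMap.range (A ^ (j + 1)).mulVecLin = LinearMap.range (A ^ j).mulVecLin :=
    Submodule.eq_of_le_of_finrank_le hle (le_of_eq hj)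
  have hstep : ∀ i : ℕ,
      LinearMap.range (A ^ (j + i)).mulVecLin = LinearMap.range (A ^ j).mulVecLin := by
    intro i
    induction i with
    | zero => rfl
    | succ i ih =>
      have h1 : A ^ (j + (i + 1)) = A ^ i * A ^ (j + 1) := by
        rw [← pow_add]
        ring_nf
      have h2 : A ^ (j + i) = A ^ i * A ^ j := by
        rw [← pow_add]
        ring_nf
      rw [h1, Matrix.mulVecLin_mul, LinearMap.range_comp, heq, ← LinearMap.range_comp,
        ← Matrix.mulVecLin_mul, ← h2, ih]
  -- Drazin spec
  obtain ⟨hc, hm, k, hk⟩ := isDrazin_drazin A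
  have hbig : A ^ (j + k + 1) * drazin A = A ^ (j + k) := by
    calc A ^ (j + k + 1) * drazin A = A ^ j * (A ^ (k + 1) * drazin A) := by
          rw [show j + k + 1 = j + (k + 1) by omega, pow_add, mul_assoc]
    _ = A ^ j * A ^ k := by rw [hk]
    _ = A ^ (j + k) := by rw [← pow_add]
  have hcomm : ∀ i : ℕ, A ^ i * drazin A = drazin A * A ^ i := fun i =>
    ((Commute.pow_left (hc : Commute A (drazin A)) i)).eq
  -- main claim
  have main : A ^ (j + 1) * drazin A = A ^ j := by
    have hvec : ∀ v : n → ℂ, (A ^ (j + 1) * drazin A).mulVec v = (A ^ j).mulVec v := by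
      intro v
      have hv : (A ^ j).mulVec v ∈ LinearMap.range (A ^ (j + k)).mulVecLin := by
        rw [hstep k]
        exact ⟨v, rfl⟩
      obtain ⟨y, hy⟩ := hv
      have hy' : (A ^ (j + k)).mulVec y = (A ^ j).mulVec v := hy
      have e1 : A ^ (j + 1) * drazin A = A * drazin A * A ^ j := by
        rw [pow_succ', mul_assoc, hcomm j, ← mul_assoc]
      have e2 : A * drazin A * A ^ (j + k) = A ^ (j + k) := by
        calc A * drazin A * A ^ (j + k) = A ^ (j + k + 1) * drazin A := by
              rw [show A ^ (j+k+1) = A * A ^ (j+k) from pow_succ' A (j+k), mul_assoc,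
                ← hcomm (j + k), ← mul_assoc]
        _ = A ^ (j + k) := hbig
      calc (A ^ (j + 1) * drazin A).mulVec v = (A * drazin A * A ^ j).mulVec v := by rw [e1]
      _ = (A * drazin A).mulVec ((A ^ j).mulVec v) := by rw [← Matrix.mulVec_mulVec]
      _ = (A * drazin A).mulVec ((A ^ (j + k)).mulVec y) := by rw [hy']
      _ = (A * drazin A * A ^ (j + k)).mulVec y := by rw [Matrix.mulVec_mulVec]
      _ = (A ^ (j + k)).mulVec y := by rw [e2]
      _ = (A ^ j).mulVec v := hy'
    ext i i'
    have := congrFun (hvec (Pi.single i' 1)) i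
    simpa [Matrix.mulVec_single] using this
  rw [spi, mul_sub, mul_one, ← mul_assoc, ← pow_succ, main, sub_self]

end Ind

section Comb

variable {n : Type*} [Fintype n] [DecidableEq n]

lemma comb (S1 A2 X1 : Matrix n n ℂ) (κ' : ℕ)
    (hA2S1 : A2 * S1 = 0) (hA2κ : A2 ^ (κ' + 1) = 0)
    (hc : S1 * X1 = X1 * S1) (hx : X1 * S1 * X1 = X1) (h3 : S1 ^ 2 * X1 = S1) :
    IsDrazin (S1 + A2) (∑ i ∈ range (κ' + 1), X1 ^ (i + 1) * A2 ^ i) := by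
  set M := S1 + A2 with hM
  set T := ∑ i ∈ range (κ' + 1), X1 ^ (i + 1) * A2 ^ i with hT
  have hSX : S1 * X1 * X1 = X1 := by rw [hc]; exact hx
  have hX1eq : X1 = S1 * (X1 * X1) := by rw [← mul_assoc]; exact hSX.symm
  have hA2X1 : A2 * X1 = 0 := by
    rw [hX1eq, ← mul_assoc, hA2S1, zero_mul]
  have hA2powX1 : ∀ i : ℕ, A2 ^ (i + 1) * X1 = 0 := fun i => by
    rw [pow_succ, mul_assoc, hA2X1, mul_zero]
  have hA2powS1 : ∀ i : ℕ, A2 ^ (i + 1) * S1 = 0 := fun i => by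
    rw [pow_succ, mul_assoc, hA2S1, mul_zero]
  have hA2T : A2 * T = 0 := by
    rw [hT, Finset.mul_sum]
    refine Finset.sum_eq_zero fun i _ => ?_
    rw [show X1 ^ (i + 1) = X1 * X1 ^ i from pow_succ' X1 i, ← mul_assoc, ← mul_assoc,
      hA2X1, zero_mul, zero_mul]
  have hA2powT : ∀ i : ℕ, A2 ^ (i + 1) * T = 0 := fun i => by
    rw [pow_succ, mul_assoc, hA2T, mul_zero]
  have hXSX : ∀ i : ℕ, X1 * S1 * X1 ^ (i + 1) = X1 ^ (i + 1) := fun i => by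
    rw [show X1 ^ (i + 1) = X1 * X1 ^ i from pow_succ' X1 i, ← mul_assoc, hx]
  have hSXpow : ∀ i : ℕ, S1 * X1 ^ (i + 1 + 1) = X1 ^ (i + 1) := fun i => by
    rw [show X1 ^ (i + 1 + 1) = X1 * X1 ^ (i + 1) from pow_succ' X1 (i + 1), ← mul_assoc,
      hc, hXSX i]
  have hS1pow : ∀ s : ℕ, S1 ^ (s + 2) * X1 = S1 ^ (s + 1) := fun s => by
    rw [show s + 2 = s + 2 from rfl, pow_add, mul_assoc, h3, ← pow_succ]
  have S1red : ∀ m s : ℕ, S1 ^ (m + s + 2) * X1 ^ (m + 1) = S1 ^ (s + 1) := by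
    intro m
    induction m with
    | zero =>
      intro s
      simpa using hS1pow s
    | succ m ih =>
      intro s
      rw [show m + 1 + s + 2 = m + (s + 1) + 2 by omega,
        show X1 ^ (m + 1 + 1) = X1 ^ (m + 1) * X1 from pow_succ X1 (m + 1), ← mul_assoc,
        ih (s + 1), show s + 1 + 1 = s + 2 by omega, hS1pow s]
  have Mpow : ∀ q : ℕ, M ^ q = ∑ i ∈ range (q + 1), S1 ^ i * A2 ^ (q - i) := by
    intro q
    induction q with
    | zero => simp
    | succ q ih =>
      rw [pow_succ, ih, Finset.sum_mul]
      have e1 : ∀ i ∈ range (q + 1), S1 ^ i * A2 ^ (q - i) * M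
          = S1 ^ i * A2 ^ (q - i) * S1 + S1 ^ i * A2 ^ (q + 1 - i) := by
        intro i hi
        rw [Finset.mem_range] at hi
        rw [hM, mul_add]
        congr 1
        rw [mul_assoc, ← pow_succ]
        congr 2
        omega
      rw [Finset.sum_congr rfl e1, Finset.sum_add_distrib]
      have e2 : (∑ i ∈ range (q + 1), S1 ^ i * A2 ^ (q - i) * S1) = S1 ^ (q + 1) := by
        rw [Finset.sum_range_succ, Nat.sub_self, pow_zero, mul_one, ← pow_succ]
        have hz : ∀ i ∈ range q, S1 ^ i * A2 ^ (q - i) * S1 = 0 := fun i hi => by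
          rw [Finset.mem_range] at hi
          rw [show q - i = (q - i - 1) + 1 by omega, mul_assoc, hA2powS1, mul_zero]
        rw [Finset.sum_eq_zero hz, zero_add]
      rw [e2]
      conv_rhs => rw [Finset.sum_range_succ]
      rw [Nat.sub_self, pow_zero, mul_one, add_comm]
  have hMT : M * T = (∑ i ∈ range κ', X1 ^ (i + 1) * A2 ^ (i + 1)) + X1 * S1 := by
    calc M * T = S1 * T + A2 * T := by rw [hM, add_mul]
    _ = S1 * T := by rw [hA2T, add_zero]
    _ = ∑ i ∈ range (κ' + 1), S1 * (X1 ^ (i + 1) * A2 ^ i) := by rw [hT, Finset.mul_sum]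
    _ = (∑ i ∈ range κ', S1 * (X1 ^ (i + 1 + 1) * A2 ^ (i + 1))) + S1 * (X1 ^ (0 + 1) * A2 ^ 0) :=
        Finset.sum_range_succ' _ κ'
    _ = (∑ i ∈ range κ', X1 ^ (i + 1) * A2 ^ (i + 1)) + X1 * S1 := by
        congr 1
        · refine Finset.sum_congr rfl fun i _ => ?_
          rw [← mul_assoc, hSXpow i]
        · rw [pow_zero, mul_one, zero_add, pow_one, hc]
  have hTM : T * M = (∑ i ∈ range κ', X1 ^ (i + 1) * A2 ^ (i + 1)) + X1 * S1 := by
    calc T * M = T * A2 + T * S1 := by rw [hM, mul_add, add_comm]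
    _ = (∑ i ∈ range κ', X1 ^ (i + 1) * A2 ^ (i + 1)) + X1 * S1 := by
        congr 1
        · -- T * A2
          rw [hT, Finset.sum_mul]
          have : ∀ i ∈ range (κ' + 1), X1 ^ (i + 1) * A2 ^ i * A2 = X1 ^ (i + 1) * A2 ^ (i + 1) :=
            fun i _ => by rw [mul_assoc, ← pow_succ]
          rw [Finset.sum_congr rfl this, Finset.sum_range_succ, hA2κ, mul_zero, add_zero]
        · -- T * S1
          rw [hT, Finset.sum_mul]
          rw [Finset.sum_range_succ' (fun i => X1 ^ (i + 1) * A2 ^ i * S1) κ']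
          have hz : ∀ i ∈ range κ', X1 ^ (i + 1 + 1) * A2 ^ (i + 1) * S1 = 0 := fun i _ => by
            rw [mul_assoc, hA2powS1, mul_zero]
          rw [Finset.sum_congr rfl hz, Finset.sum_const_zero, zero_add, pow_zero, mul_one,
            pow_one]
  refine ⟨hMT.trans hTM.symm, ?_, κ' + 2, ?_⟩
  · -- T * M * T = T
    rw [hTM, add_mul]
    have z1 : (∑ i ∈ range κ', X1 ^ (i + 1) * A2 ^ (i + 1)) * T = 0 := by
      rw [Finset.sum_mul]
      refine Finset.sum_eq_zero fun i _ => ?_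
      rw [mul_assoc, hA2powT, mul_zero]
    have z2 : X1 * S1 * T = T := by
      rw [hT, Finset.mul_sum]
      refine Finset.sum_congr rfl fun i _ => ?_
      rw [← mul_assoc, hXSX]
    rw [z1, z2, zero_add]
  · -- M ^ (κ' + 3) * T = M ^ (κ' + 2)
    have hMp1T : M ^ (κ' + 2 + 1) * T = ∑ i ∈ range (κ' + 1), S1 ^ (κ' + 2 - i) * A2 ^ i := by
      rw [Mpow (κ' + 2 + 1), Finset.sum_mul, Finset.sum_range_succ, Nat.sub_self, pow_zero,
        mul_one]
      have hz : ∀ i ∈ range (κ' + 2 + 1), S1 ^ i * A2 ^ (κ' + 2 + 1 - i) * T = 0 := fun i hi => by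
        rw [Finset.mem_range] at hi
        rw [show κ' + 2 + 1 - i = (κ' + 2 - i) + 1 by omega, mul_assoc, hA2powT, mul_zero]
      rw [Finset.sum_eq_zero hz, zero_add, hT, Finset.mul_sum]
      refine Finset.sum_congr rfl fun i hi => ?_
      rw [Finset.mem_range] at hi
      rw [← mul_assoc, show κ' + 2 + 1 = i + (κ' + 1 - i) + 2 by omega, S1red i (κ' + 1 - i),
        show κ' + 1 - i + 1 = κ' + 2 - i by omega]
    have hMp : M ^ (κ' + 2) = ∑ i ∈ range (κ' + 1), S1 ^ (κ' + 2 - i) * A2 ^ i := by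
      rw [Mpow (κ' + 2)]
      rw [← Finset.sum_range_reflect (fun i => S1 ^ i * A2 ^ (κ' + 2 - i)) (κ' + 2 + 1)]
      have e : ∀ j ∈ range (κ' + 2 + 1),
          S1 ^ (κ' + 2 + 1 - 1 - j) * A2 ^ (κ' + 2 - (κ' + 2 + 1 - 1 - j))
            = S1 ^ (κ' + 2 - j) * A2 ^ j := by
        intro j hj
        rw [Finset.mem_range] at hj
        congr 2
        all_goals omega
      rw [Finset.sum_congr rfl e]
      refine (Finset.sum_subset (Finset.range_subset_range.mpr (by omega)) fun j hj hj' => ?_).symm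
      rw [Finset.mem_range] at hj
      rw [Finset.mem_range, not_lt] at hj'
      rw [show j = (κ' + 1) + (j - (κ' + 1)) by omega, pow_add, ← mul_assoc, hA2κ,
        mul_zero, zero_mul]
    rw [hMp1T, hMp]

end Comb

section Core

variable {n : Type*} [Fintype n] [DecidableEq n]

lemma core' (A a F G : Matrix n n ℂ) (κ' : ℕ)
    (hcom : A * a = a * A) (haa : a * A * a = a)
    (hk : A ^ (κ' + 1) * (1 - A * a) = 0)
    (hF : A * a * F = F) (hG : A * a * G = G)
    (hFG : F * (a * G) = G - F) (hGF : G * (a * F) = G - F) :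
    drazin (A - F) = (a + a * G * a)
      - ∑ i ∈ range (κ' + 1), (a + a * G * a) ^ (i + 1) * (a * G) * A ^ i * (1 - A * a) := by
  set π : Matrix n n ℂ := 1 - A * a with hπd
  set R : Matrix n n ℂ := a + a * G * a with hRd
  set S1 : Matrix n n ℂ := A * (A * a) - F with hS1d
  set A2 : Matrix n n ℂ := A * π with hA2d
  set X1 : Matrix n n ℂ := R - R * (a * G) * π with hX1d
  -- basic identities
  have n1 : A * a * a = a := by rw [hcom]; exact haa
  have n2 : a * (A * a) = a := by rw [← mul_assoc]; exact haa
  have n3 : A * a * (A * a) = A * a := by rw [mul_assoc, n2]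
  have hπa : π * a = 0 := by rw [hπd, sub_mul, one_mul, n1, sub_self]
  have haπ : a * π = 0 := by rw [hπd, mul_sub, mul_one, n2, sub_self]
  have hπA : π * A = A * π := by
    rw [hπd, sub_mul, mul_sub, one_mul, mul_one]
    congr 1
    rw [mul_assoc, ← hcom]
  have hπP : π * (A * a) = 0 := by rw [← mul_assoc, hπA, mul_assoc, hπa, mul_zero]
  have hππ : π * π = π := by rw [hπd, mul_sub, mul_one, ← hπd, hπP, sub_zero]
  have hπF : π * F = 0 := by rw [hπd, sub_mul, one_mul, hF, sub_self]
  have hπG : π * G = 0 := by rw [hπd, sub_mul, one_mul, hG, sub_self]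
  have hcπA : Commute π A := hπA
  have hcAa : Commute A a := hcom
  have hcaA : Commute a A := hcAa.symm
  have hπApow : ∀ i : ℕ, π * A ^ i = A ^ i * π := fun i => (hcπA.pow_right i).eq
  have haApow : ∀ i : ℕ, a * A ^ i = A ^ i * a := fun i => (hcaA.pow_right i).eq
  have d1 : a * (A * (A * a)) = A * a := by
    rw [← mul_assoc, ← hcom, mul_assoc, n2]
  have d2 : A * (A * a) * a = A * a := by rw [mul_assoc, n1]
  have d3 : A * (A * a) * (A * a) = A * (A * a) := by rw [mul_assoc, n3]
  have d4 : A * a * (G * a) = G * a := by rw [← mul_assoc, hG]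
  have d6 : A * a * (G * π) = G * π := by rw [← mul_assoc, hG]
  have d7 : F * π = F - F * (A * a) := by rw [hπd, mul_sub, mul_one]
  -- A2 facts
  have hπAAa : π * (A * (A * a)) = 0 := by rw [← mul_assoc, hπA, mul_assoc, hπP, mul_zero]
  have hA2S1 : A2 * S1 = 0 := by
    have e : A2 * S1 = A * (π * (A * (A * a))) - A * (π * F) := by
      rw [hA2d, hS1d]; noncomm_ring
    rw [e, hπAAa, hπF, mul_zero, sub_self]
  have hA2pow : ∀ i : ℕ, A2 ^ (i + 1) = A ^ (i + 1) * π := by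
    intro i
    induction i with
    | zero => rw [pow_one, pow_one, hA2d]
    | succ i ih =>
      calc A2 ^ (i + 2) = A2 ^ (i + 1) * A2 := by rw [pow_succ]
      _ = A ^ (i + 1) * π * (A * π) := by rw [ih, hA2d]
      _ = A ^ (i + 1) * (π * A) * π := by rw [mul_assoc, mul_assoc, mul_assoc]
      _ = A ^ (i + 1) * (A * π) * π := by rw [hπA]
      _ = (A ^ (i + 1) * A) * (π * π) := by rw [mul_assoc, mul_assoc, mul_assoc]
      _ = A ^ (i + 2) * π := by rw [hππ, ← pow_succ]
  have hA2κ : A2 ^ (κ' + 1) = 0 := by rw [hA2pow κ']; exact hk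
  -- main products
  have m4 : S1 * R = A * a := by
    have e : S1 * R = A * (A * a) * a + (A * (A * a) * a) * (G * a) - F * a - (F * (a * G)) * a := by
      rw [hS1d, hRd]; noncomm_ring
    rw [e, d2, hFG, sub_mul]
    have e2 : A * a * (G * a) = G * a := d4
    rw [e2]
    noncomm_ring
  have m5 : S1 * X1 = A * a - a * G * π := by
    have e : S1 * X1 = S1 * R - (S1 * R) * (a * G * π) := by
      rw [hX1d]; noncomm_ring
    have e2 : A * a * (a * G * π) = a * G * π := by
      rw [show A * a * (a * G * π) = ((A * a * a) * G) * π from by noncomm_ring, n1]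
    rw [e, m4, e2]
  have hπS1 : π * S1 = 0 := by
    have e : π * S1 = π * (A * (A * a)) - π * F := by rw [hS1d]; noncomm_ring
    rw [e, hπAAa, hπF, sub_zero]
  have m6 : X1 * S1 = A * a - a * G * π := by
    have e : X1 * S1 = R * S1 - R * ((a * G) * (π * S1)) := by rw [hX1d]; noncomm_ring
    rw [e, hπS1, mul_zero, mul_zero, sub_zero]
    have e2 : R * S1 = a * (A * (A * a)) + (a * G) * (a * (A * (A * a))) - a * F - a * (G * (a * F)) := by
      rw [hRd, hS1d]; noncomm_ring
    rw [e2, d1, hGF, hπd]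
    noncomm_ring
  have ax1 : S1 * X1 = X1 * S1 := m5.trans m6.symm
  have m7 : A * a * R = R := by
    have e : A * a * R = A * a * a + ((A * a * a) * G) * a := by rw [hRd]; noncomm_ring
    rw [e, n1, hRd]
  have m8 : A * a * X1 = X1 := by
    have e : A * a * X1 = A * a * R - ((A * a * R) * (a * G)) * π := by rw [hX1d]; noncomm_ring
    rw [e, m7, hX1d]
  have m9 : π * R = 0 := by
    have e : π * R = π * a + ((π * a) * G) * a := by rw [hRd]; noncomm_ring
    rw [e, hπa, zero_mul, zero_mul, add_zero]
  have m10 : π * X1 = 0 := by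
    have e : π * X1 = π * R - ((π * R) * (a * G)) * π := by rw [hX1d]; noncomm_ring
    rw [e, m9, zero_mul, zero_mul, sub_zero]
  have ax2 : X1 * S1 * X1 = X1 := by
    rw [m6]
    have e : (A * a - a * G * π) * X1 = A * a * X1 - (a * G) * (π * X1) := by noncomm_ring
    rw [e, m8, m10, mul_zero, sub_zero]
  have ax3 : S1 ^ 2 * X1 = S1 := by
    rw [pow_two, mul_assoc, m5]
    have e : S1 * (A * a - a * G * π)
        = A * (A * a) * (A * a) - (A * (A * a) * a) * (G * π) - F * (A * a) + (F * (a * G)) * π := by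
      rw [hS1d]; noncomm_ring
    rw [e, d3, d2, hFG, d6, sub_mul, d7, hS1d]
    noncomm_ring
  -- combine
  have hDz := comb S1 A2 X1 κ' hA2S1 hA2κ ax1 ax2 ax3
  have hSum : S1 + A2 = A - F := by rw [hS1d, hA2d, hπd]; noncomm_ring
  rw [hSum] at hDz
  have hdz : drazin (A - F) = ∑ i ∈ range (κ' + 1), X1 ^ (i + 1) * A2 ^ i := drazin_eq hDz
  -- rewrite the sum
  have hX1sq : X1 * X1 = R * X1 := by
    nth_rewrite 1 [hX1d]
    have e : (R - R * (a * G) * π) * X1 = R * X1 - (R * (a * G)) * (π * X1) := by noncomm_ring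
    rw [e, m10, mul_zero, sub_zero]
  have hX1pow : ∀ i : ℕ, X1 ^ (i + 1) = R ^ i * X1 := by
    intro i
    induction i with
    | zero => rw [pow_one, pow_zero, one_mul]
    | succ i ih =>
      rw [pow_succ, ih, mul_assoc, hX1sq, ← mul_assoc, ← pow_succ]
  have r1 : ∀ s : ℕ, a * (A ^ (s + 1) * π) = 0 := fun s => by
    rw [← mul_assoc, haApow (s + 1), mul_assoc, haπ, mul_zero]
  have r2 : ∀ s : ℕ, R * (A ^ (s + 1) * π) = 0 := fun s => by
    have e : R * (A ^ (s + 1) * π) = a * (A ^ (s + 1) * π) + (a * G) * (a * (A ^ (s + 1) * π)) := by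
      rw [hRd]; noncomm_ring
    rw [e, r1, mul_zero, add_zero]
  have r3 : ∀ s : ℕ, π * (A ^ (s + 1) * π) = A ^ (s + 1) * π := fun s => by
    rw [← mul_assoc, hπApow (s + 1), mul_assoc, hππ]
  have hX1Aπ : ∀ s : ℕ, X1 * (A ^ (s + 1) * π) = -((R * (a * G)) * (A ^ (s + 1) * π)) := by
    intro s
    have e : X1 * (A ^ (s + 1) * π)
        = R * (A ^ (s + 1) * π) - (R * (a * G)) * (π * (A ^ (s + 1) * π)) := by
      rw [hX1d]; noncomm_ring
    rw [e, r2, r3, zero_sub]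
  have hterm : ∀ i ∈ range (κ' + 1), X1 ^ (i + 1) * A2 ^ i
      = (if i = 0 then R else 0) - R ^ (i + 1) * (a * G) * A ^ i * π := by
    intro i _
    rcases i with _ | s
    · rw [if_pos rfl, pow_one, pow_zero, pow_zero, pow_one, mul_one, mul_one, hX1d]
    · rw [if_neg (Nat.succ_ne_zero s), zero_sub, hX1pow (s + 1), hA2pow s, mul_assoc,
        hX1Aπ s]
      have e : R ^ (s + 1) * -((R * (a * G)) * (A ^ (s + 1) * π))
          = -(((R ^ (s + 1) * R) * (a * G)) * (A ^ (s + 1) * π)) := by noncomm_ring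
      rw [e, ← pow_succ]
      have e2 : (R ^ (s + 2) * (a * G)) * (A ^ (s + 1) * π)
          = R ^ (s + 1 + 1) * (a * G) * A ^ (s + 1) * π := by
        rw [show s + 2 = s + 1 + 1 by omega]; noncomm_ring
      rw [e2]
  rw [hdz, Finset.sum_congr rfl hterm, Finset.sum_sub_distrib,
    Finset.sum_ite_eq' (range (κ' + 1)) 0 (fun _ => R),
    if_pos (Finset.mem_range.mpr (Nat.succ_pos κ'))]

end Core

lemma core {n : Type*} [Fintype n] [DecidableEq n]
    (A a F G : Matrix n n ℂ) (κ : ℕ)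
    (hcom : A * a = a * A) (haa : a * A * a = a)
    (hk : A ^ κ * (1 - A * a) = 0)
    (hF : A * a * F = F) (hG : A * a * G = G)
    (hFG : F * (a * G) = G - F) (hGF : G * (a * F) = G - F) :
    drazin (A - F) = (a + a * G * a)
      - ∑ i ∈ range κ, (a + a * G * a) ^ (i + 1) * (a * G) * A ^ i * (1 - A * a) := by
  rcases κ with _ | κ'
  · have hπ0 : (1 : Matrix n n ℂ) - A * a = 0 := by simpa using hk
    have hk1 : A ^ (0 + 1) * (1 - A * a) = 0 := by rw [hπ0, mul_zero]
    rw [core' A a F G 0 hcom haa hk1 hF hG hFG hGF, Finset.range_zero, Finset.sum_empty,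
      Finset.sum_range_one, hπ0, mul_zero, sub_zero]
  · exact core' A a F G κ' hcom haa hk hF hG hFG hGF

theorem stmt7 {n m : ℕ} (A : Matrix (Fin n) (Fin n) ℂ) (D : Matrix (Fin m) (Fin m) ℂ)
    (C : Matrix (Fin n) (Fin m) ℂ) (B : Matrix (Fin m) (Fin n) ℂ)
    (Z : Matrix (Fin m) (Fin m) ℂ) (hZ : Z = D - B * drazin A * C)
    (S : Matrix (Fin n) (Fin n) ℂ) (hS : S = A - C * drazin D * B)
    (h1 : spi A * (C * drazin D * B) = 0)
    (h2 : spi D = spi Z) :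
    drazin S = drazin A + drazin A * C * drazin Z * B * drazin A -
      ∑ i ∈ range (ind A),
        (drazin A + drazin A * C * drazin Z * B * drazin A) ^ (i + 1) *
          (drazin A * C * drazin Z * B) * A ^ i * spi A := by
  obtain ⟨hcomA, haA, _⟩ := isDrazin_drazin A
  obtain ⟨hcomD, haD, _⟩ := isDrazin_drazin D
  obtain ⟨hcomZ, haZ, _⟩ := isDrazin_drazin Z
  set a := drazin A with ha
  set d := drazin D with hd
  set z := drazin Z with hz
  have hk : A ^ ind A * (1 - A * a) = 0 := by
    have h := pow_ind_mul_spi A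
    rwa [spi, ← ha] at h
  have hF : A * a * (C * d * B) = C * d * B := by
    have h1' := h1
    rw [spi, ← ha, sub_mul, one_mul, sub_eq_zero] at h1'
    exact h1'.symm
  have hDd : D * d = Z * z := by
    have h := h2
    rw [spi, spi, ← hd, ← hz, sub_right_inj] at h
    exact h
  have hdDd : d * (D * d) = d := by rw [← mul_assoc]; exact haD
  have hDdd : D * d * d = d := by rw [hcomD]; exact haD
  have hZzz : Z * z * z = z := by rw [hcomZ]; exact haZ
  have hzZz : z * (Z * z) = z := by rw [← mul_assoc]; exact haZ
  have hBaC : B * a * C = D - Z := by rw [hZ, sub_sub_cancel]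
  have e3 : d * D * (z * B) = z * B := by
    rw [← hcomD, hDd, ← Matrix.mul_assoc, hZzz]
  have e4 : d * (Z * z) = d := by rw [← hDd]; exact hdDd
  have e5 : z * (D * d) = z := by rw [hDd]; exact hzZz
  have e6 : z * Z * d = d := by rw [← hcomZ, ← hDd]; exact hDdd
  have hFG : C * d * B * (a * (C * z * B)) = C * z * B - C * d * B := by
    have e1 : C * d * B * (a * (C * z * B)) = C * (d * ((B * a * C) * (z * B))) := by
      simp only [Matrix.mul_assoc]
    rw [e1, hBaC]
    have e2 : d * ((D - Z) * (z * B)) = (d * D) * (z * B) - (d * (Z * z)) * B := by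
      simp only [Matrix.sub_mul, Matrix.mul_sub, Matrix.mul_assoc]
    rw [e2, e3, e4, Matrix.mul_sub, ← Matrix.mul_assoc, ← Matrix.mul_assoc]
  have hGF : C * z * B * (a * (C * d * B)) = C * z * B - C * d * B := by
    have e1 : C * z * B * (a * (C * d * B)) = C * (z * ((B * a * C) * (d * B))) := by
      simp only [Matrix.mul_assoc]
    rw [e1, hBaC]
    have e2 : z * ((D - Z) * (d * B)) = (z * (D * d)) * B - ((z * Z) * d) * B := by
      simp only [Matrix.sub_mul, Matrix.mul_sub, Matrix.mul_assoc]
    rw [e2, e5, e6, Matrix.mul_sub, ← Matrix.mul_assoc, ← Matrix.mul_assoc]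
  have hG : A * a * (C * z * B) = C * z * B := by
    have hrw : C * z * B = C * d * B + C * d * B * (a * (C * z * B)) := by
      rw [hFG]; abel
    rw [hrw]
    have e : A * a * (C * d * B + C * d * B * (a * (C * z * B)))
        = (A * a * (C * d * B)) + (A * a * (C * d * B)) * (a * (C * z * B)) := by
      simp only [Matrix.mul_add, Matrix.mul_assoc]
    rw [e, hF]
  rw [hS]
  rw [core A a (C * d * B) (C * z * B) (ind A) hcomA haA hk hF hG hFG hGF]
  simp only [spi, ← ha, ← hz, Matrix.mul_assoc]
end

section
/- Let A, B, C, D be complex matrices of compatible sizes with A, D square. Set S = A − C D^d B, H = B A^d, K = A^d C, Γ = H K, E = A A^d − K Γ^d H. If K Γ^d H S A^d = 0 and K Γ^π D^d H = 0, then E S E has a group inverse and (E S E)^# = E A^d E. -/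
open Matrix Finset

attribute [local instance] Classical.propDecidable

open Polynomial in
theorem drazin_exists {n : Type*} [Fintype n] [DecidableEq n] (A : Matrix n n ℂ) :
    ∃ X : Matrix n n ℂ,
      A * X = X * A ∧ X * A * X = X ∧ ∃ k : ℕ, A ^ (k + 1) * X = A ^ k := by
  obtain ⟨q, hq, hndvd⟩ :=
    A.charpoly.exists_eq_pow_rootMultiplicity_mul_and_not_dvd A.charpoly_monic.ne_zero 0
  set k := A.charpoly.rootMultiplicity 0 with hk
  rw [Polynomial.C_0, sub_zero] at hq hndvd
  have hcop : IsCoprime ((X : ℂ[X]) ^ (k + 1)) q :=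
    ((Polynomial.prime_X.coprime_iff_not_dvd).mpr hndvd).pow_left
  obtain ⟨u, v, huv⟩ := hcop
  have hcg : ∀ {p q : ℂ[X]}, p = q → (aeval A) p = (aeval A) q := by
    intro p q h; rw [h]
  have hq0 : (aeval A) ((X : ℂ[X]) ^ k * q) = 0 := by
    rw [← hq]; exact A.aeval_self_charpoly
  have hXk : (aeval A) ((X : ℂ[X]) ^ k) = A ^ k := by simp
  have hXk1 : (aeval A) ((X : ℂ[X]) ^ (k + 1)) = A ^ (k + 1) := by simp
  have hmul : ∀ p q : ℂ[X], (aeval A) p * (aeval A) q = (aeval A) (p * q) :=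
    fun p q => (_root_.map_mul (aeval A) p q).symm
  have hkey : (aeval A) (u * X ^ (2 * k + 1)) = A ^ k := by
    have h1 : ((X : ℂ[X]) ^ k) * (u * X ^ (k + 1) + v * q)
        = u * X ^ (2 * k + 1) + v * (X ^ k * q) := by ring
    have h2 := hcg h1
    rw [huv, mul_one, hXk, map_add] at h2
    have h3 : (aeval A) (v * ((X : ℂ[X]) ^ k * q)) = 0 := by
      rw [← hmul, hq0, mul_zero]
    rw [h3, add_zero] at h2
    exact h2.symm
  refine ⟨(aeval A) (u ^ 2 * X ^ (2 * k + 1)), ?_, ?_, k, ?_⟩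
  · calc A * (aeval A) (u ^ 2 * X ^ (2 * k + 1))
        = (aeval A) (X : ℂ[X]) * (aeval A) (u ^ 2 * X ^ (2 * k + 1)) := by rw [aeval_X]
      _ = (aeval A) (X * (u ^ 2 * X ^ (2 * k + 1))) := hmul _ _
      _ = (aeval A) (u ^ 2 * X ^ (2 * k + 1) * X) := hcg (by ring)
      _ = (aeval A) (u ^ 2 * X ^ (2 * k + 1)) * (aeval A) (X : ℂ[X]) := (hmul _ _).symm
      _ = (aeval A) (u ^ 2 * X ^ (2 * k + 1)) * A := by rw [aeval_X]
  · calc (aeval A) (u ^ 2 * X ^ (2 * k + 1)) * A * (aeval A) (u ^ 2 * X ^ (2 * k + 1))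
        = (aeval A) (u ^ 2 * X ^ (2 * k + 1)) * (aeval A) (X : ℂ[X])
            * (aeval A) (u ^ 2 * X ^ (2 * k + 1)) := by rw [aeval_X]
      _ = (aeval A) (u ^ 2 * X ^ (2 * k + 1) * X * (u ^ 2 * X ^ (2 * k + 1))) := by
            rw [hmul, hmul]
      _ = (aeval A) (u ^ 3 * X ^ (2 * k + 2) * (u * X ^ (2 * k + 1))) := hcg (by ring)
      _ = (aeval A) (u ^ 3 * X ^ (2 * k + 2)) * (aeval A) (u * X ^ (2 * k + 1)) :=
            (hmul _ _).symm
      _ = (aeval A) (u ^ 3 * X ^ (2 * k + 2)) * A ^ k := by rw [hkey]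
      _ = (aeval A) (u ^ 3 * X ^ (2 * k + 2)) * (aeval A) ((X : ℂ[X]) ^ k) := by rw [hXk]
      _ = (aeval A) (u ^ 3 * X ^ (2 * k + 2) * X ^ k) := hmul _ _
      _ = (aeval A) (u ^ 2 * X ^ (k + 1) * (u * X ^ (2 * k + 1))) := hcg (by ring)
      _ = (aeval A) (u ^ 2 * X ^ (k + 1)) * (aeval A) (u * X ^ (2 * k + 1)) :=
            (hmul _ _).symm
      _ = (aeval A) (u ^ 2 * X ^ (k + 1)) * A ^ k := by rw [hkey]
      _ = (aeval A) (u ^ 2 * X ^ (k + 1)) * (aeval A) ((X : ℂ[X]) ^ k) := by rw [hXk]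
      _ = (aeval A) (u ^ 2 * X ^ (k + 1) * X ^ k) := hmul _ _
      _ = (aeval A) (u ^ 2 * X ^ (2 * k + 1)) := hcg (by ring)
  · calc A ^ (k + 1) * (aeval A) (u ^ 2 * X ^ (2 * k + 1))
        = (aeval A) ((X : ℂ[X]) ^ (k + 1)) * (aeval A) (u ^ 2 * X ^ (2 * k + 1)) := by
            rw [hXk1]
      _ = (aeval A) ((X : ℂ[X]) ^ (k + 1) * (u ^ 2 * X ^ (2 * k + 1))) := hmul _ _
      _ = (aeval A) (u * X ^ (k + 1) * (u * X ^ (2 * k + 1))) := hcg (by ring)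
      _ = (aeval A) (u * X ^ (k + 1)) * (aeval A) (u * X ^ (2 * k + 1)) := (hmul _ _).symm
      _ = (aeval A) (u * X ^ (k + 1)) * A ^ k := by rw [hkey]
      _ = (aeval A) (u * X ^ (k + 1)) * (aeval A) ((X : ℂ[X]) ^ k) := by rw [hXk]
      _ = (aeval A) (u * X ^ (k + 1) * X ^ k) := hmul _ _
      _ = (aeval A) (u * X ^ (2 * k + 1)) := hcg (by ring)
      _ = A ^ k := hkey

theorem drazin_spec {n : Type*} [Fintype n] [DecidableEq n] (A : Matrix n n ℂ) :
    A * drazin A = drazin A * A ∧ drazin A * A * drazin A = drazin A ∧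
      ∃ k : ℕ, A ^ (k + 1) * drazin A = A ^ k := by
  have h := drazin_exists A
  rw [drazin, dif_pos h]
  exact h.choose_spec

set_option maxHeartbeats 4000000 in
theorem stmt11 {n m : ℕ} (A : Matrix (Fin n) (Fin n) ℂ) (D : Matrix (Fin m) (Fin m) ℂ)
    (C : Matrix (Fin n) (Fin m) ℂ) (B : Matrix (Fin m) (Fin n) ℂ)
    (H : Matrix (Fin m) (Fin n) ℂ) (hH : H = B * drazin A)
    (K : Matrix (Fin n) (Fin m) ℂ) (hK : K = drazin A * C)
    (G : Matrix (Fin m) (Fin m) ℂ) (hG : G = H * K)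
    (S : Matrix (Fin n) (Fin n) ℂ) (hS : S = A - C * drazin D * B)
    (E : Matrix (Fin n) (Fin n) ℂ) (hE : E = A * drazin A - K * drazin G * H)
    (h1 : K * drazin G * H * S * drazin A = 0)
    (h2 : K * spi G * drazin D * H = 0) :
    (E * S * E) * (E * drazin A * E) * (E * S * E) = E * S * E ∧
    (E * drazin A * E) * (E * S * E) * (E * drazin A * E) = E * drazin A * E ∧
    (E * S * E) * (E * drazin A * E) = (E * drazin A * E) * (E * S * E) := by
  obtain ⟨hAa, haAa, -⟩ := drazin_spec A
  subst hH hK hG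
  obtain ⟨hGg, hgGg, -⟩ := drazin_spec (B * drazin A * (drazin A * C))
  set a := drazin A with ha
  set d := drazin D with hd
  set g := drazin (B * a * (a * C)) with hg
  have r0' : a * A = A * a := hAa.symm
  have r0 : ∀ {p : ℕ} (Z : Matrix (Fin n) (Fin p) ℂ), a * (A * Z) = A * (a * Z) := by
    intro p Z
    rw [← Matrix.mul_assoc, ← Matrix.mul_assoc, r0']
  have r2' : A * (a * a) = a := by rw [← Matrix.mul_assoc, hAa]; exact haAa
  have r2 : ∀ {p : ℕ} (Z : Matrix (Fin n) (Fin p) ℂ), A * (a * (a * Z)) = a * Z := by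
    intro p Z
    have h := congrArg (fun M => M * Z) r2'
    simpa only [Matrix.mul_assoc] using h
  have r4' : g * (B * (a * (a * (C * g)))) = g := by
    simpa only [Matrix.mul_assoc] using hgGg
  have r4 : ∀ {p : ℕ} (Z : Matrix (Fin m) (Fin p) ℂ),
      g * (B * (a * (a * (C * (g * Z))))) = g * Z := by
    intro p Z
    have h := congrArg (fun M => M * Z) r4'
    simpa only [Matrix.mul_assoc] using h
  have r5 : ∀ {p : ℕ} (Z : Matrix (Fin m) (Fin p) ℂ),
      B * (a * (a * (C * (g * Z)))) = g * (B * (a * (a * (C * Z)))) := by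
    intro p Z
    have h := congrArg (fun M => M * Z) hGg
    simpa only [Matrix.mul_assoc] using h
  rw [hS] at h1
  simp only [Matrix.mul_assoc, Matrix.mul_sub, Matrix.sub_mul, r0, r0', r2, r2', r4, r4'] at h1
  have h1e : a * (C * (g * (B * a)))
      = a * (C * (g * (B * (a * (C * (d * (B * a))))))) := sub_eq_zero.mp h1
  simp only [spi] at h2
  rw [← hg] at h2
  simp only [Matrix.mul_assoc, Matrix.mul_sub, Matrix.sub_mul, Matrix.mul_one,
    Matrix.one_mul, r5, r0, r0', r2, r2', r4, r4'] at h2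
  have h2e : a * (C * (d * (B * a)))
      = a * (C * (g * (B * (a * (a * (C * (d * (B * a)))))))) := sub_eq_zero.mp h2
  have hC4 : a * (C * (g * (B * (a * C))))
      = a * (C * (g * (B * (a * (C * (d * (B * (a * C)))))))) := by
    have h := congrArg (fun M => M * (A * (a * C))) h1e
    simpa only [Matrix.mul_assoc, r0, r0', r2, r2'] using h
  have hC2 : a * (C * (d * (B * (a * C))))
      = a * (C * (g * (B * (a * (a * (C * (d * (B * (a * C))))))))) := by
    have h := congrArg (fun M => M * (A * (a * C))) h2e
    simpa only [Matrix.mul_assoc, r0, r0', r2, r2'] using h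
  have b1 : a * (C * (d * (B * (A * a))))
      = a * (C * (g * (B * (a * (a * (C * (d * (B * (A * a))))))))) := by
    have h := congrArg (fun M => M * A) h2e
    simpa only [Matrix.mul_assoc, r0, r0', r2, r2'] using h
  have b2 : a * (C * (d * (B * (a * (C * (g * (B * a)))))))
      = a * (C * (g * (B * (a * (a * (C * (d * (B * (a * (C * (g * (B * a)))))))))))) := by
    have h := congrArg (fun M => M * (g * (B * a))) hC2
    simpa only [Matrix.mul_assoc, r0, r0', r2, r2'] using h
  have b3 : a * (a * (C * (g * (B * (A * a)))))
      = a * (a * (C * (g * (B * (a * (C * (d * (B * (A * a))))))))) := by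
    have h := congrArg (fun M => a * (M * A)) h1e
    simpa only [Matrix.mul_assoc, r0, r0', r2, r2'] using h
  have b4 : a * (a * (C * (g * (B * (a * (C * (g * (B * a))))))))
      = a * (a * (C * (g * (B * (a * (C * (d * (B * (a * (C * (g * (B * a)))))))))))) := by
    have h := congrArg (fun M => a * (M * (g * (B * a)))) hC4
    simpa only [Matrix.mul_assoc, r0, r0', r2, r2'] using h
  have b5 : a * (C * (g * (B * (a * (a * (a * (C * (g * (B * (A * a))))))))))
      = a * (C * (g * (B * (a * (a * (a * (C * (g * (B * (a * (C * (d * (B * (A * a)))))))))))))) := by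
    have h := congrArg (fun M => a * (C * (g * (B * (a * a)))) * (M * A)) h1e
    simpa only [Matrix.mul_assoc, r0, r0', r2, r2'] using h
  have b6 : a * (C * (g * (B * (a * (a * (a * (C * (g * (B * (a * (C * (g * (B * a)))))))))))))
      = a * (C * (g * (B * (a * (a * (a * (C * (g * (B * (a * (C * (d * (B * (a * (C * (g * (B * a))))))))))))))))) := by
    have h := congrArg (fun M => a * (C * (g * (B * (a * a)))) * (M * (g * (B * a)))) hC4
    simpa only [Matrix.mul_assoc, r0, r0', r2, r2'] using h
  have hz1 : a * (C * (g * (B * (a * (a * (C * (d * (B * (A * a))))))))) - a * (C * (d * (B * (A * a)))) = 0 := sub_eq_zero_of_eq b1.symm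
  have hz2 : a * (C * (d * (B * (a * (C * (g * (B * a))))))) - a * (C * (g * (B * (a * (a * (C * (d * (B * (a * (C * (g * (B * a)))))))))))) = 0 := sub_eq_zero_of_eq b2
  have hz3 : a * (a * (C * (g * (B * (a * (C * (d * (B * (A * a))))))))) - a * (a * (C * (g * (B * (A * a))))) = 0 := sub_eq_zero_of_eq b3.symm
  have hz4 : a * (a * (C * (g * (B * (a * (C * (g * (B * a)))))))) - a * (a * (C * (g * (B * (a * (C * (d * (B * (a * (C * (g * (B * a)))))))))))) = 0 := sub_eq_zero_of_eq b4
  have hz5 : a * (C * (g * (B * (a * (a * (a * (C * (g * (B * (A * a)))))))))) - a * (C * (g * (B * (a * (a * (a * (C * (g * (B * (a * (C * (d * (B * (A * a)))))))))))))) = 0 := sub_eq_zero_of_eq b5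
  have hz6 : a * (C * (g * (B * (a * (a * (a * (C * (g * (B * (a * (C * (d * (B * (a * (C * (g * (B * a))))))))))))))))) - a * (C * (g * (B * (a * (a * (a * (C * (g * (B * (a * (C * (g * (B * a))))))))))))) = 0 := sub_eq_zero_of_eq b6.symm
  have hEE : E * E = E := by
    rw [hE]
    simp only [Matrix.mul_assoc, Matrix.mul_sub, Matrix.sub_mul, r0, r0', r2, r2', r4, r4']
    abel
  have hXT : E * a * E * (E * S * E) = E := by
    calc E * a * E * (E * S * E)
        = A * a
          - a * (C * (g * (B * a)))
          - a * (C * (d * (B * (A * a))))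
          + a * (C * (g * (B * (a * (a * (C * (d * (B * (A * a)))))))))
          + a * (C * (d * (B * (a * (C * (g * (B * a)))))))
          - a * (C * (g * (B * (a * (a * (C * (d * (B * (a * (C * (g * (B * a))))))))))))
          - a * (a * (C * (g * (B * (A * a)))))
          + a * (a * (C * (g * (B * (a * (C * (g * (B * a))))))))
          + a * (a * (C * (g * (B * (a * (C * (d * (B * (A * a)))))))))
          - a * (a * (C * (g * (B * (a * (C * (d * (B * (a * (C * (g * (B * a))))))))))))
          + a * (C * (g * (B * (a * (a * (a * (C * (g * (B * (A * a))))))))))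
          - a * (C * (g * (B * (a * (a * (a * (C * (g * (B * (a * (C * (g * (B * a)))))))))))))
          - a * (C * (g * (B * (a * (a * (a * (C * (g * (B * (a * (C * (d * (B * (A * a))))))))))))))
          + a * (C * (g * (B * (a * (a * (a * (C * (g * (B * (a * (C * (d * (B * (a * (C * (g * (B * a))))))))))))))))) := by
          rw [hE, hS]
          simp only [Matrix.mul_assoc, Matrix.mul_sub, Matrix.sub_mul, r0, r0', r2, r2', r4, r4']
          abel
      _ = (A * a
          - a * (C * (g * (B * a)))
          - a * (C * (d * (B * (A * a))))
          + a * (C * (g * (B * (a * (a * (C * (d * (B * (A * a)))))))))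
          + a * (C * (d * (B * (a * (C * (g * (B * a)))))))
          - a * (C * (g * (B * (a * (a * (C * (d * (B * (a * (C * (g * (B * a))))))))))))
          - a * (a * (C * (g * (B * (A * a)))))
          + a * (a * (C * (g * (B * (a * (C * (g * (B * a))))))))
          + a * (a * (C * (g * (B * (a * (C * (d * (B * (A * a)))))))))
          - a * (a * (C * (g * (B * (a * (C * (d * (B * (a * (C * (g * (B * a))))))))))))
          + a * (C * (g * (B * (a * (a * (a * (C * (g * (B * (A * a))))))))))
          - a * (C * (g * (B * (a * (a * (a * (C * (g * (B * (a * (C * (g * (B * a)))))))))))))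
          - a * (C * (g * (B * (a * (a * (a * (C * (g * (B * (a * (C * (d * (B * (A * a))))))))))))))
          + a * (C * (g * (B * (a * (a * (a * (C * (g * (B * (a * (C * (d * (B * (a * (C * (g * (B * a))))))))))))))))))
          - ((a * (C * (g * (B * (a * (a * (C * (d * (B * (A * a)))))))))
                - a * (C * (d * (B * (A * a)))))
            + (a * (C * (d * (B * (a * (C * (g * (B * a)))))))
                - a * (C * (g * (B * (a * (a * (C * (d * (B * (a * (C * (g * (B * a)))))))))))))
            + (a * (a * (C * (g * (B * (a * (C * (d * (B * (A * a)))))))))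
                - a * (a * (C * (g * (B * (A * a))))))
            + (a * (a * (C * (g * (B * (a * (C * (g * (B * a))))))))
                - a * (a * (C * (g * (B * (a * (C * (d * (B * (a * (C * (g * (B * a)))))))))))))
            + (a * (C * (g * (B * (a * (a * (a * (C * (g * (B * (A * a))))))))))
                - a * (C * (g * (B * (a * (a * (a * (C * (g * (B * (a * (C * (d * (B * (A * a)))))))))))))))
            + (a * (C * (g * (B * (a * (a * (a * (C * (g * (B * (a * (C * (d * (B * (a * (C * (g * (B * a)))))))))))))))))
                - a * (C * (g * (B * (a * (a * (a * (C * (g * (B * (a * (C * (g * (B * a))))))))))))))) := by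
          rw [hz1, hz2, hz3, hz4, hz5, hz6]; simp
      _ = E := by rw [hE]; simp only [Matrix.mul_assoc]; abel
  have zET : E * (E * S * E) = E * S * E := by
    have h : E * (E * S * E) = E * E * S * E := by noncomm_ring
    rw [h, hEE]
  have zTE : E * S * E * E = E * S * E := by
    have h : E * S * E * E = E * S * (E * E) := by noncomm_ring
    rw [h, hEE]
  have zEX : E * (E * a * E) = E * a * E := by
    have h : E * (E * a * E) = E * E * a * E := by noncomm_ring
    rw [h, hEE]
  have zXE : E * a * E * E = E * a * E := by
    have h : E * a * E * E = E * a * (E * E) := by noncomm_ring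
    rw [h, hEE]
  have hone : (E * a * E + (1 - E)) * (E * S * E + (1 - E)) = 1 := by
    have h : (E * a * E + (1 - E)) * (E * S * E + (1 - E))
        = E * a * E * (E * S * E) + (E * a * E - E * a * E * E)
          + (E * S * E - E * (E * S * E)) + (1 - E - E + E * E) := by noncomm_ring
    rw [h, hXT, zXE, zET, hEE]
    abel
  have hcomm := mul_eq_one_comm.mp hone
  have hTX : E * S * E * (E * a * E) = E := by
    have h : (E * S * E + (1 - E)) * (E * a * E + (1 - E))
        = E * S * E * (E * a * E) + (E * S * E - E * S * E * E)
          + (E * a * E - E * (E * a * E)) + (1 - E - E + E * E) := by noncomm_ring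
    rw [h, zTE, zEX, hEE] at hcomm
    calc E * S * E * (E * a * E)
        = E * S * E * (E * a * E) + (E * S * E - E * S * E)
          + (E * a * E - E * a * E) + (1 - E - E + E) + (E - 1) := by abel
      _ = 1 + (E - 1) := by rw [hcomm]
      _ = E := by abel
  refine ⟨?_, ?_, ?_⟩
  · rw [hTX]; exact zET
  · rw [hXT]; exact zEX
  · rw [hTX, hXT]
end
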